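/- Let F_h and F_i be continuous cumulative distribution functions of Borel probability measures μ_h, μ_i on [0,∞) with finite first moments, let m_h, m_i, r_h, r_i, α be strictly positive reals, and define G(t) := m_h ∫_{(0,t]} x dμ_h(x) + α·m_i ∫_{(0,t]} x dμ_i(x) for t ≥ 0. Suppose there exists τ ≥ 0 with G(τ) = r_h + α·r_i, G(s) < G(τ) for all 0 ≤ s < τ, and G(s) > G(τ) for all s > τ. Let (A_t), (B_t), (R_t) be real sequences with A_t → m_h, B_t → α·m_i, R_t → r_h + α·r_i, and let (τ_t) be a sequence in [0,∞) with A_t ∫_{(0,τ_t]} x dμ_h(x) + B_t ∫_{(0,τ_t]} x dμ_i(x) = R_t for every t. Then τ_t → τ, and m_h ∫_{(0,τ]} x dμ_h(x) + α·m_i ∫_{(0,τ]} x dμ_i(x) = r_h + α·r_i. -/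
import Mathlib


open MeasureTheory Filter Set

/-- Necessity of the equilibrium equation (part (II) of the proof of Theorem 3,
deterministic/pathwise form): if the perturbed equilibrium equations
`A_t ∫_{(0,τ_t]} x dμh + B_t ∫_{(0,τ_t]} x dμi = R_t` hold with
`A_t → m_h`, `B_t → α m_i`, `R_t → r_h + α r_i`, and `τ` is the strict crossing point
of `G` at level `r_h + α r_i`, then `τ_t → τ` and the equilibrium equation
`m_h ∫_{(0,τ]} x dμh + α m_i ∫_{(0,τ]} x dμi = r_h + α r_i` holds. -/
theorem equilibrium_equation_necessary
    (μh μi : Measure ℝ) [IsProbabilityMeasure μh] [IsProbabilityMeasure μi]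
    (hsupph : μh (Set.Iio 0) = 0) (hsuppi : μi (Set.Iio 0) = 0)
    (Fh Fi : ℝ → ℝ)
    (hFh : ∀ t, Fh t = (μh (Set.Iic t)).toReal)
    (hFi : ∀ t, Fi t = (μi (Set.Iic t)).toReal)
    (hFhcont : Continuous Fh) (hFicont : Continuous Fi)
    (hmomh : IntegrableOn (fun x => x) (Set.Ici 0) μh)
    (hmomi : IntegrableOn (fun x => x) (Set.Ici 0) μi)
    (mh mi rh ri α : ℝ)
    (hmh : 0 < mh) (hmi : 0 < mi) (hrh : 0 < rh) (hri : 0 < ri) (hα : 0 < α)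
    (G : ℝ → ℝ)
    (hG : ∀ t, G t =
      mh * ∫ x in Set.Ioc 0 t, x ∂μh + α * mi * ∫ x in Set.Ioc 0 t, x ∂μi)
    (τ : ℝ) (hτ0 : 0 ≤ τ) (hτeq : G τ = rh + α * ri)
    (hlt : ∀ s, 0 ≤ s → s < τ → G s < G τ) (hgt : ∀ s, τ < s → G τ < G s)
    (A B R : ℕ → ℝ)
    (hA : Tendsto A atTop (nhds mh)) (hB : Tendsto B atTop (nhds (α * mi)))
    (hR : Tendsto R atTop (nhds (rh + α * ri)))
    (τt : ℕ → ℝ) (hτt0 : ∀ t, 0 ≤ τt t)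
    (heq : ∀ t,
      A t * ∫ x in Set.Ioc 0 (τt t), x ∂μh
        + B t * ∫ x in Set.Ioc 0 (τt t), x ∂μi = R t) :
    Tendsto τt atTop (nhds τ) ∧
      mh * ∫ x in Set.Ioc 0 τ, x ∂μh + α * mi * ∫ x in Set.Ioc 0 τ, x ∂μi
        = rh + α * ri := by
  -- Abbreviations for the partial first moments
  set Ih : ℝ → ℝ := fun t => ∫ x in Set.Ioc 0 t, x ∂μh with hIh
  set Ii : ℝ → ℝ := fun t => ∫ x in Set.Ioc 0 t, x ∂μi with hIi
  have hIhmono : ∀ s t : ℝ, s ≤ t → Ih s ≤ Ih t := by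
    intro s t hst
    exact setIntegral_mono_set
      (hmomh.mono_set (fun x hx => le_of_lt hx.1))
      ((ae_restrict_iff' measurableSet_Ioc).2 (ae_of_all _ fun x hx => hx.1.le))
      (HasSubset.Subset.eventuallyLE (Set.Ioc_subset_Ioc_right hst))
  have hIimono : ∀ s t : ℝ, s ≤ t → Ii s ≤ Ii t := by
    intro s t hst
    exact setIntegral_mono_set
      (hmomi.mono_set (fun x hx => le_of_lt hx.1))
      ((ae_restrict_iff' measurableSet_Ioc).2 (ae_of_all _ fun x hx => hx.1.le))
      (HasSubset.Subset.eventuallyLE (Set.Ioc_subset_Ioc_right hst))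
  have hGτ : mh * Ih τ + α * mi * Ii τ = rh + α * ri := by
    rw [← hG τ]; exact hτeq
  refine ⟨?_, hGτ⟩
  set L : ℝ := rh + α * ri with hL
  rw [Metric.tendsto_atTop]
  intro ε hε
  -- upper bound: eventually τt t < τ + ε
  have hupper : ∀ᶠ t in atTop, τt t < τ + ε := by
    have hGgt : L < G (τ + ε) := hτeq ▸ hgt (τ + ε) (by linarith)
    have htend : Tendsto (fun t => A t * Ih (τ + ε) + B t * Ii (τ + ε)) atTop
        (nhds (G (τ + ε))) := by
      have h := (hA.mul_const (Ih (τ + ε))).add (hB.mul_const (Ii (τ + ε)))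
      rw [hG (τ + ε)]; exact h
    have h1 : ∀ᶠ t in atTop, (L + G (τ + ε)) / 2 < A t * Ih (τ + ε) + B t * Ii (τ + ε) :=
      htend.eventually (eventually_gt_nhds (by linarith))
    have h2 : ∀ᶠ t in atTop, R t < (L + G (τ + ε)) / 2 :=
      hR.eventually (eventually_lt_nhds (by linarith))
    have h3 : ∀ᶠ t in atTop, 0 < A t := hA.eventually (eventually_gt_nhds hmh)
    have h4 : ∀ᶠ t in atTop, 0 < B t :=
      hB.eventually (eventually_gt_nhds (by positivity))
    filter_upwards [h1, h2, h3, h4] with t h1 h2 h3 h4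
    by_contra hcon
    push_neg at hcon
    have hmh' : Ih (τ + ε) ≤ Ih (τt t) := hIhmono _ _ hcon
    have hmi' : Ii (τ + ε) ≤ Ii (τt t) := hIimono _ _ hcon
    have : A t * Ih (τ + ε) + B t * Ii (τ + ε) ≤ R t := by
      rw [← heq t]
      gcongr
    linarith
  -- lower bound: eventually τ - ε < τt t
  have hlower : ∀ᶠ t in atTop, τ - ε < τt t := by
    rcases lt_or_ge τ ε with hτε | hτε
    · exact Eventually.of_forall fun t => lt_of_lt_of_le (by linarith) (hτt0 t)
    · have hGlt : G (τ - ε) < L := hτeq ▸ hlt (τ - ε) (by linarith) (by linarith)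
      have htend : Tendsto (fun t => A t * Ih (τ - ε) + B t * Ii (τ - ε)) atTop
          (nhds (G (τ - ε))) := by
        have h := (hA.mul_const (Ih (τ - ε))).add (hB.mul_const (Ii (τ - ε)))
        rw [hG (τ - ε)]; exact h
      have h1 : ∀ᶠ t in atTop, A t * Ih (τ - ε) + B t * Ii (τ - ε) < (L + G (τ - ε)) / 2 :=
        htend.eventually (eventually_lt_nhds (by linarith))
      have h2 : ∀ᶠ t in atTop, (L + G (τ - ε)) / 2 < R t :=
        hR.eventually (eventually_gt_nhds (by linarith))
      have h3 : ∀ᶠ t in atTop, 0 < A t := hA.eventually (eventually_gt_nhds hmh)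
      have h4 : ∀ᶠ t in atTop, 0 < B t :=
        hB.eventually (eventually_gt_nhds (by positivity))
      filter_upwards [h1, h2, h3, h4] with t h1 h2 h3 h4
      by_contra hcon
      push_neg at hcon
      have hmh' : Ih (τt t) ≤ Ih (τ - ε) := hIhmono _ _ hcon
      have hmi' : Ii (τt t) ≤ Ii (τ - ε) := hIimono _ _ hcon
      have : R t ≤ A t * Ih (τ - ε) + B t * Ii (τ - ε) := by
        rw [← heq t]
        gcongr
      linarith
  have := (hupper.and hlower).exists_forall_of_atTop
  obtain ⟨N, hN⟩ := this
  refine ⟨N, fun n hn => ?_⟩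
  obtain ⟨h1, h2⟩ := hN n hn
  rw [Real.dist_eq, abs_sub_lt_iff]
  constructor <;> linarith
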